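/- arXiv:2605.08417 — 4 statements merged into one kernel-verified Lean document; each statement's English description precedes it below -/
import Mathlib

section
/- Let S, A be finite sets, P0(·|z) a probability distribution on S for each z ∈ S×A, r : S×A → ℝ, γ ∈ (0,1), δ ≥ 0, ε ≥ 0, and suppose L := γ(1 + √(2δ)) < 1. Define for U : S×A → ℝ the operator R_ε[U](z) := r(z) + γ E_{P0(·|z)}[v[U](X)] − γ√(2δ)·√(Var_{P0(·|z)}(v[U](X)) + ε), where v[U](s) = max_a U(s,a). Then R_ε is an L-contraction in the supremum norm: ‖R_ε[U1] − R_ε[U2]‖∞ ≤ L‖U1 − U2‖∞ for all U1, U2. -/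
/-!
`U ↦ v[U]` is 1-Lipschitz in the sup norm, and so are the mean and the regularised standard
deviation `f ↦ √(Var f + ε)` of a finite distribution. For the latter, `√(Var f + ε)` is the
Euclidean norm of the centred vector `(√(p ω) (f ω - E f))_ω` extended by one coordinate `√ε`;
the coordinate cancels in differences, so the reverse triangle inequality bounds the change by
`√(Var (f - g)) ≤ ‖f - g‖∞`. The two terms of `R_ε` thus contribute `γ` and `γ √(2δ)`.
-/

noncomputable def supNorm {Z : Type*} [Fintype Z] [Nonempty Z] (f : Z → ℝ) : ℝ :=
  ⨆ z, |f z|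

noncomputable def vmax {S A : Type*} [Fintype A] [Nonempty A] (U : S × A → ℝ) (s : S) : ℝ :=
  ⨆ a, U (s, a)

def expect {Ω : Type*} [Fintype Ω] (p : Ω → ℝ) (f : Ω → ℝ) : ℝ :=
  ∑ ω, p ω * f ω

noncomputable def variance {Ω : Type*} [Fintype Ω] (p : Ω → ℝ) (f : Ω → ℝ) : ℝ :=
  expect p (fun ω => f ω ^ 2) - (expect p f) ^ 2

/-- The stabilized approximate robust Bellman operator `R_ε`. -/
noncomputable def Rop {S A : Type*} [Fintype S] [Fintype A] [Nonempty A]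
    (P0 : S × A → S → ℝ) (r : S × A → ℝ) (γ δ ε : ℝ) (U : S × A → ℝ) (z : S × A) : ℝ :=
  r z + γ * expect (P0 z) (vmax U)
    - γ * Real.sqrt (2 * δ) * Real.sqrt (variance (P0 z) (vmax U) + ε)

section FiniteDistribution

variable {Ω : Type*} [Fintype Ω] (p : Ω → ℝ)

lemma expect_sub (f g : Ω → ℝ) :
    expect p (fun ω => f ω - g ω) = expect p f - expect p g := by
  simp only [expect, mul_sub, Finset.sum_sub_distrib]

lemma abs_expect_le {f : Ω → ℝ} {M : ℝ} (hp : ∀ ω, 0 ≤ p ω) (hsum : ∑ ω, p ω = 1)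
    (hf : ∀ ω, |f ω| ≤ M) : |expect p f| ≤ M :=
  calc |expect p f| ≤ ∑ ω, |p ω * f ω| := Finset.abs_sum_le_sum_abs _ _
    _ ≤ ∑ ω, p ω * M := Finset.sum_le_sum fun ω _ => by
        rw [abs_mul, abs_of_nonneg (hp ω)]
        exact mul_le_mul_of_nonneg_left (hf ω) (hp ω)
    _ = M := by rw [← Finset.sum_mul, hsum, one_mul]

lemma variance_eq_sum_sq_sub (f : Ω → ℝ) (hsum : ∑ ω, p ω = 1) :
    variance p f = ∑ ω, p ω * (f ω - expect p f) ^ 2 := by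
  have expand : ∀ ω, p ω * (f ω - expect p f) ^ 2
      = p ω * f ω ^ 2 - 2 * expect p f * (p ω * f ω) + expect p f ^ 2 * p ω := fun ω => by ring
  simp only [expand, Finset.sum_add_distrib, Finset.sum_sub_distrib, ← Finset.mul_sum, hsum,
    variance]
  simp only [expect]
  ring

lemma sqrt_variance_le {f : Ω → ℝ} {M : ℝ} (hp : ∀ ω, 0 ≤ p ω) (hsum : ∑ ω, p ω = 1)
    (hM : 0 ≤ M) (hf : ∀ ω, |f ω| ≤ M) : √(variance p f) ≤ M := by
  have hsq : expect p (fun ω => f ω ^ 2) ≤ M ^ 2 := by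
    refine (le_abs_self _).trans (abs_expect_le p hp hsum fun ω => ?_)
    rw [abs_pow]
    exact pow_le_pow_left₀ (abs_nonneg _) (hf ω) 2
  have hvar : variance p f ≤ M ^ 2 := by
    unfold variance
    nlinarith [sq_nonneg (expect p f)]
  exact (Real.sqrt_le_sqrt hvar).trans_eq (Real.sqrt_sq hM)

noncomputable def stdVec (ε : ℝ) (f : Ω → ℝ) : EuclideanSpace ℝ (Option Ω) :=
  WithLp.toLp 2 fun o => o.elim (√ε) fun ω => √(p ω) * (f ω - expect p f)

lemma norm_stdVec {ε : ℝ} (f : Ω → ℝ) (hp : ∀ ω, 0 ≤ p ω) (hsum : ∑ ω, p ω = 1)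
    (hε : 0 ≤ ε) : ‖stdVec p ε f‖ = √(variance p f + ε) := by
  rw [EuclideanSpace.norm_eq, Fintype.sum_option, variance_eq_sum_sq_sub p f hsum, add_comm]
  congr 1
  simp only [stdVec, Option.elim, Real.norm_eq_abs, sq_abs, mul_pow, Real.sq_sqrt hε,
    Real.sq_sqrt (hp _)]

lemma stdVec_sub (ε : ℝ) (f g : Ω → ℝ) :
    stdVec p ε f - stdVec p ε g = stdVec p 0 (fun ω => f ω - g ω) := by
  ext (_ | ω)
  · simp [stdVec]
  · simp only [stdVec, expect_sub, WithLp.ofLp_sub, Pi.sub_apply, Option.elim]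
    ring

lemma abs_sqrt_variance_add_sub_le {ε : ℝ} (f g : Ω → ℝ) (hp : ∀ ω, 0 ≤ p ω)
    (hsum : ∑ ω, p ω = 1) (hε : 0 ≤ ε) :
    |√(variance p f + ε) - √(variance p g + ε)| ≤ √(variance p fun ω => f ω - g ω) := by
  rw [← norm_stdVec p f hp hsum hε, ← norm_stdVec p g hp hsum hε,
    ← add_zero (variance p _), ← norm_stdVec p _ hp hsum le_rfl, ← stdVec_sub]
  exact abs_norm_sub_norm_le _ _

end FiniteDistribution

lemma abs_ciSup_sub_ciSup_le {ι : Type*} [Finite ι] [Nonempty ι] {f g : ι → ℝ} {M : ℝ}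
    (h : ∀ i, |f i - g i| ≤ M) : |(⨆ i, f i) - ⨆ i, g i| ≤ M := by
  have half : ∀ f g : ι → ℝ, (∀ i, f i - g i ≤ M) → (⨆ i, f i) - ⨆ i, g i ≤ M :=
    fun f g h => sub_le_iff_le_add.2 <| ciSup_le fun i =>
      (sub_le_iff_le_add.1 (h i)).trans <|
        add_le_add_right (le_ciSup (Set.finite_range g).bddAbove i) M
  exact abs_sub_le_iff.2 ⟨half f g fun i => (abs_le.1 (h i)).2,
    half g f fun i => neg_sub (f i) (g i) ▸ neg_le.1 (abs_le.1 (h i)).1⟩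

section SupNorm

variable {Z : Type*} [Fintype Z] [Nonempty Z]

lemma abs_le_supNorm (f : Z → ℝ) (z : Z) : |f z| ≤ supNorm f :=
  le_ciSup (f := fun z => |f z|) (Set.finite_range _).bddAbove z

lemma supNorm_nonneg (f : Z → ℝ) : 0 ≤ supNorm f :=
  (abs_nonneg _).trans (abs_le_supNorm f (Classical.arbitrary Z))

lemma supNorm_le {f : Z → ℝ} {M : ℝ} (h : ∀ z, |f z| ≤ M) : supNorm f ≤ M :=
  ciSup_le h

end SupNorm

lemma abs_vmax_sub_le {S A : Type*} [Fintype S] [Nonempty S] [Fintype A] [Nonempty A]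
    (U1 U2 : S × A → ℝ) (s : S) :
    |vmax U1 s - vmax U2 s| ≤ supNorm fun z => U1 z - U2 z :=
  abs_ciSup_sub_ciSup_le fun a => abs_le_supNorm (fun z => U1 z - U2 z) (s, a)

lemma abs_Rop_sub_le {S A : Type*} [Fintype S] [Nonempty S] [Fintype A] [Nonempty A]
    {P0 : S × A → S → ℝ} {γ ε : ℝ} (r : S × A → ℝ) (δ : ℝ) (U1 U2 : S × A → ℝ) (z : S × A)
    (hp : ∀ s, 0 ≤ P0 z s) (hsum : ∑ s, P0 z s = 1) (hγ : 0 ≤ γ) (hε : 0 ≤ ε) :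
    |Rop P0 r γ δ ε U1 z - Rop P0 r γ δ ε U2 z|
      ≤ γ * (1 + √(2 * δ)) * supNorm fun z => U1 z - U2 z := by
  set M := supNorm fun z => U1 z - U2 z
  set p := P0 z
  have hv : ∀ s, |vmax U1 s - vmax U2 s| ≤ M := abs_vmax_sub_le U1 U2
  have hE : |expect p (vmax U1) - expect p (vmax U2)| ≤ M :=
    expect_sub p _ _ ▸ abs_expect_le p hp hsum hv
  have hσ : |√(variance p (vmax U1) + ε) - √(variance p (vmax U2) + ε)| ≤ M :=
    (abs_sqrt_variance_add_sub_le p _ _ hp hsum hε).trans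
      (sqrt_variance_le p hp hsum (supNorm_nonneg _) hv)
  have hdiff : Rop P0 r γ δ ε U1 z - Rop P0 r γ δ ε U2 z
      = γ * (expect p (vmax U1) - expect p (vmax U2))
        - γ * √(2 * δ) * (√(variance p (vmax U1) + ε) - √(variance p (vmax U2) + ε)) := by
    simp only [Rop, p]
    ring
  calc |Rop P0 r γ δ ε U1 z - Rop P0 r γ δ ε U2 z|
      ≤ γ * |expect p (vmax U1) - expect p (vmax U2)|
        + γ * √(2 * δ) * |√(variance p (vmax U1) + ε) - √(variance p (vmax U2) + ε)| := by
        rw [hdiff]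
        refine (abs_sub _ _).trans_eq ?_
        rw [abs_mul, abs_mul, abs_of_nonneg hγ,
          abs_of_nonneg (mul_nonneg hγ (Real.sqrt_nonneg _))]
    _ ≤ γ * M + γ * √(2 * δ) * M := by gcongr
    _ = γ * (1 + √(2 * δ)) * M := by ring

theorem stmt4_general {S A : Type*} [Fintype S] [Nonempty S] [Fintype A] [Nonempty A]
    (P0 : S × A → S → ℝ) (hP0 : ∀ z, (∀ s, 0 ≤ P0 z s) ∧ ∑ s, P0 z s = 1)
    (r : S × A → ℝ) (γ δ ε : ℝ) (hγ : γ ∈ Set.Ioo (0 : ℝ) 1) (hε : 0 ≤ ε)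
    (U1 U2 : S × A → ℝ) :
    supNorm (fun z => Rop P0 r γ δ ε U1 z - Rop P0 r γ δ ε U2 z)
      ≤ γ * (1 + Real.sqrt (2 * δ)) * supNorm (fun z => U1 z - U2 z) :=
  supNorm_le fun z => abs_Rop_sub_le r δ U1 U2 z (hP0 z).1 (hP0 z).2 hγ.1.le hε

theorem stmt4 {S A : Type*} [Fintype S] [Nonempty S] [Fintype A] [Nonempty A]
    (P0 : S × A → S → ℝ) (hP0 : ∀ z, (∀ s, 0 ≤ P0 z s) ∧ ∑ s, P0 z s = 1)
    (r : S × A → ℝ) (γ δ ε : ℝ) (hγ : γ ∈ Set.Ioo (0 : ℝ) 1) (hδ : 0 ≤ δ) (hε : 0 ≤ ε)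
    (hL : γ * (1 + Real.sqrt (2 * δ)) < 1) (U1 U2 : S × A → ℝ) :
    supNorm (fun z => Rop P0 r γ δ ε U1 z - Rop P0 r γ δ ε U2 z)
      ≤ γ * (1 + Real.sqrt (2 * δ)) * supNorm (fun z => U1 z - U2 z) :=
  stmt4_general P0 hP0 r γ δ ε hγ hε U1 U2
end

section
/- Let W be a bounded random variable on a finite probability space with E[W] = 0, |W| ≤ M for some M > 0, and Var(W) = σ². For η ∈ (0, 1/M), the function L(η) := 1 − ηW is a nonnegative likelihood ratio with E[L(η)] = 1, and the tilted measure Q_η defined by E_{Q_η}[φ] := E[φ·L(η)] satisfies D_KL(Q_η ‖ P) ≤ η²σ²/(2(1 − ηM)), where P is the base measure. -/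
/-- KL divergence between two distributions on a finite space. -/
noncomputable def klDiv {Ω : Type*} [Fintype Ω] (q p : Ω → ℝ) : ℝ :=
  ∑ ω, q ω * Real.log (q ω / p ω)

open Real Set
open InformationTheory (klFun klFun_apply klFun_one hasDerivAt_klFun)

lemma hasDerivAt_sq_div_sub_klFun (a : ℝ) {x : ℝ} (hx : x ≠ 0) :
    HasDerivAt (fun y => (y - 1) ^ 2 / (2 * a) - klFun y) ((x - 1) / a - log x) x := by
  refine ((((hasDerivAt_id x).sub_const 1).pow 2).div_const (2 * a) |>.sub
    (hasDerivAt_klFun hx)).congr_deriv ?_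
  norm_num [mul_div_mul_left _ _ (two_ne_zero' ℝ)]

lemma klFun_le_sq_div_two {x : ℝ} (hx : 1 ≤ x) : klFun x ≤ (x - 1) ^ 2 / 2 := by
  have hmono : MonotoneOn (fun y => (y - 1) ^ 2 / (2 * 1) - klFun y) (Ici 1) := by
    refine monotoneOn_of_hasDerivWithinAt_nonneg (f' := fun y => (y - 1) / 1 - log y)
      (convex_Ici 1) (by fun_prop) (fun y hy => ?_) (fun y hy => ?_)
    all_goals rw [interior_Ici] at hy
    · exact (hasDerivAt_sq_div_sub_klFun 1 (by linarith [mem_Ioi.mp hy])).hasDerivWithinAt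
    · rw [div_one]
      linarith [log_le_sub_one_of_pos (by linarith [mem_Ioi.mp hy] : (0 : ℝ) < y)]
  have := hmono self_mem_Ici hx hx
  norm_num [klFun_one] at this
  linarith

lemma klFun_le_sq_div_two_mul {x : ℝ} (hx0 : 0 < x) (hx1 : x ≤ 1) :
    klFun x ≤ (x - 1) ^ 2 / (2 * x) := by
  have hanti : AntitoneOn (fun y => (y - 1) ^ 2 / (2 * x) - klFun y) (Icc x 1) := by
    refine antitoneOn_of_hasDerivWithinAt_nonpos (f' := fun y => (y - 1) / x - log y)
      (convex_Icc x 1) (by fun_prop) (fun y hy => ?_) (fun y hy => ?_)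
    all_goals rw [interior_Icc] at hy
    · exact (hasDerivAt_sq_div_sub_klFun x (by linarith [hy.1])).hasDerivWithinAt
    · obtain ⟨hxy, hy1⟩ := hy
      have hy0 : 0 < y := hx0.trans hxy
      -- `-log y = log y⁻¹ ≤ y⁻¹ - 1 = (1 - y) / y ≤ (1 - y) / x`
      have hlog : log y⁻¹ ≤ y⁻¹ - 1 := log_le_sub_one_of_pos (inv_pos.mpr hy0)
      have hyx : (1 - y) / y ≤ (1 - y) / x := div_le_div_of_nonneg_left (by linarith) hx0 hxy.le
      rw [log_inv] at hlog
      have : y⁻¹ - 1 = (1 - y) / y := by field_simp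
      have : (y - 1) / x = -((1 - y) / x) := by ring
      linarith
  have := hanti ⟨le_rfl, hx1⟩ ⟨hx1, le_rfl⟩ hx1
  norm_num [klFun_one] at this
  linarith

lemma klFun_le_sq_div {m x : ℝ} (hm0 : 0 < m) (hm1 : m ≤ 1) (hmx : m ≤ x) :
    klFun x ≤ (x - 1) ^ 2 / (2 * m) := by
  rcases le_total x 1 with hx1 | hx1
  · exact (klFun_le_sq_div_two_mul (hm0.trans_le hmx) hx1).trans
      (div_le_div_of_nonneg_left (sq_nonneg _) (by positivity) (by linarith))
  · exact (klFun_le_sq_div_two hx1).trans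
      (div_le_div_of_nonneg_left (sq_nonneg _) (by positivity) (by linarith))

section FiniteSpace

variable {Ω : Type*} [Fintype Ω] {p : Ω → ℝ}

lemma expect_mono (hp : ∀ ω, 0 ≤ p ω) {f g : Ω → ℝ} (hfg : ∀ ω, f ω ≤ g ω) :
    expect p f ≤ expect p g :=
  Finset.sum_le_sum fun ω _ => mul_le_mul_of_nonneg_left (hfg ω) (hp ω)

lemma expect_const_mul (c : ℝ) (f : Ω → ℝ) :
    expect p (fun ω => c * f ω) = c * expect p f := by
  rw [expect, expect, Finset.mul_sum]
  exact Finset.sum_congr rfl fun ω _ => mul_left_comm _ _ _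

lemma expect_one_sub (hp1 : ∑ ω, p ω = 1) (f : Ω → ℝ) :
    expect p (fun ω => 1 - f ω) = 1 - expect p f := by
  simp only [expect, mul_sub, mul_one, Finset.sum_sub_distrib, hp1]

lemma expect_sq_eq_variance {W : Ω → ℝ} (hW : expect p W = 0) :
    expect p (fun ω => W ω ^ 2) = variance p W := by
  simp [variance, hW]

lemma klDiv_mul_eq_expect_klFun (hp1 : ∑ ω, p ω = 1) {L : Ω → ℝ} (hL : expect p L = 1) :
    klDiv (fun ω => p ω * L ω) p = expect p (fun ω => klFun (L ω)) := by
  have hterm : ∀ ω,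
      p ω * L ω * log (p ω * L ω / p ω) = p ω * (klFun (L ω) - (1 - L ω)) := by
    intro ω
    rcases eq_or_ne (p ω) 0 with h | h
    · simp [h]
    · rw [mul_div_cancel_left₀ _ h, klFun_apply]
      ring
  have hsum : expect p (fun ω => klFun (L ω) - (1 - L ω))
      = expect p (fun ω => klFun (L ω)) - expect p (fun ω => 1 - L ω) := by
    simp only [expect, mul_sub, Finset.sum_sub_distrib]
  rw [klDiv, Finset.sum_congr rfl fun ω _ => hterm ω, ← expect, hsum, expect_one_sub hp1, hL,
    sub_self, sub_zero]

end FiniteSpace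

theorem stmt7_general {Ω : Type*} [Fintype Ω] (p : Ω → ℝ)
    (hp : ∀ ω, 0 ≤ p ω) (hp1 : ∑ ω, p ω = 1)
    (W : Ω → ℝ) (M σ η : ℝ) (hWb : ∀ ω, |W ω| ≤ M)
    (hE : expect p W = 0) (hVar : variance p W = σ ^ 2)
    (hη : η ∈ Set.Ioo 0 (1 / M)) :
    (∀ ω, 0 ≤ 1 - η * W ω) ∧
    expect p (fun ω => 1 - η * W ω) = 1 ∧
    klDiv (fun ω => p ω * (1 - η * W ω)) p ≤ η ^ 2 * σ ^ 2 / (2 * (1 - η * M)) := by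
  obtain ⟨hη0, hηM⟩ := hη
  have hM : 0 < M := one_div_pos.mp (hη0.trans hηM)
  have hηM1 : η * M < 1 := (lt_div_iff₀ hM).mp hηM
  have hL : ∀ ω, 1 - η * M ≤ 1 - η * W ω := fun ω =>
    sub_le_sub_left (mul_le_mul_of_nonneg_left ((le_abs_self _).trans (hWb ω)) hη0.le) 1
  have hmean : expect p (fun ω => 1 - η * W ω) = 1 := by
    rw [expect_one_sub hp1, expect_const_mul, hE, mul_zero, sub_zero]
  refine ⟨fun ω => by linarith [hL ω], hmean, ?_⟩
  calc klDiv (fun ω => p ω * (1 - η * W ω)) p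
      = expect p (fun ω => klFun (1 - η * W ω)) := klDiv_mul_eq_expect_klFun hp1 hmean
    _ ≤ expect p (fun ω => η ^ 2 / (2 * (1 - η * M)) * W ω ^ 2) :=
        expect_mono hp fun ω =>
          (klFun_le_sq_div (by linarith) (by linarith [mul_pos hη0 hM]) (hL ω)).trans_eq (by ring)
    _ = η ^ 2 * σ ^ 2 / (2 * (1 - η * M)) := by
        rw [expect_const_mul, expect_sq_eq_variance hE, hVar]
        ring

theorem stmt7 {Ω : Type*} [Fintype Ω] (p : Ω → ℝ)
    (hp : ∀ ω, 0 ≤ p ω) (hp1 : ∑ ω, p ω = 1)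
    (W : Ω → ℝ) (M σ η : ℝ) (hM : 0 < M) (hWb : ∀ ω, |W ω| ≤ M)
    (hE : expect p W = 0) (hVar : variance p W = σ ^ 2)
    (hη : η ∈ Set.Ioo 0 (1 / M)) :
    (∀ ω, 0 ≤ 1 - η * W ω) ∧
    expect p (fun ω => 1 - η * W ω) = 1 ∧
    klDiv (fun ω => p ω * (1 - η * W ω)) p ≤ η ^ 2 * σ ^ 2 / (2 * (1 - η * M)) :=
  stmt7_general p hp hp1 W M σ η hWb hE hVar hη
end

section
/- Let W be a random variable on a finite probability space with E[W] = 0, |W| ≤ M, Var(W) = σ², and let δ > 0. Then for every probability measure Q with D_KL(Q‖P) ≤ δ, one has E_Q[−W] ≤ √(2δ)·σ + δ·M. -/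
/-!
Donsker–Varadhan: for every `λ`, `λ·E_Q[-W] ≤ D(Q‖P) + log E_P[exp(-λW)]`, and for a centred `W`
bounded by `M` the exponential moment satisfies Bernstein's bound
`E_P[exp(-λW)] ≤ 1 + λ²σ²/(2(1 - λM))` on `0 ≤ λ < 1/M`. Hence
`E_Q[-W] ≤ δ/λ + λσ²/(2(1 - λM))`, and `λ = √(2δ)/(σ + M√(2δ))` turns the right-hand side into
`√(2δ)·σ + δ·M`. This choice needs `σ > 0`, so the bound is first proved with any `τ > σ` in
place of `σ`, and then `τ ↓ σ`.
-/

open Real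

lemma mul_le_mul_log_sub_add_exp {u : ℝ} (hu : 0 ≤ u) (v : ℝ) :
    u * v ≤ u * log u - u + exp v := by
  rcases hu.eq_or_lt with rfl | hu
  · simp [(exp_pos v).le]
  · have h := add_one_le_exp (v - log u)
    rw [exp_sub, exp_log hu, le_div_iff₀ hu] at h
    linarith

/-- The Donsker–Varadhan inequality, in the linear form `log x ≤ x - 1`. -/
lemma expect_le_klDiv_sub_one_add_expect_exp {Ω : Type*} [Fintype Ω] {p Q : Ω → ℝ}
    (hp : ∀ ω, 0 ≤ p ω) (hQ : ∀ ω, 0 ≤ Q ω) (hQ1 : ∑ ω, Q ω = 1)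
    (hac : ∀ ω, p ω = 0 → Q ω = 0) (f : Ω → ℝ) :
    expect Q f ≤ klDiv Q p - 1 + expect p (fun ω => exp (f ω)) := by
  have hpointwise : ∀ ω, Q ω * f ω ≤ Q ω * log (Q ω / p ω) - Q ω + p ω * exp (f ω) := by
    intro ω
    rcases (hp ω).eq_or_lt with hp0 | hpos
    · simp [hac ω hp0.symm, ← hp0]
    · have hQp : p ω * (Q ω / p ω) = Q ω := mul_div_cancel₀ _ hpos.ne'
      calc Q ω * f ω = p ω * (Q ω / p ω * f ω) := by rw [← mul_assoc, hQp]
        _ ≤ p ω * (Q ω / p ω * log (Q ω / p ω) - Q ω / p ω + exp (f ω)) :=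
          mul_le_mul_of_nonneg_left
            (mul_le_mul_log_sub_add_exp (div_nonneg (hQ ω) hpos.le) _) hpos.le
        _ = Q ω * log (Q ω / p ω) - Q ω + p ω * exp (f ω) := by
          rw [mul_add, mul_sub, ← mul_assoc, hQp]
  calc expect Q f ≤ ∑ ω, (Q ω * log (Q ω / p ω) - Q ω + p ω * exp (f ω)) :=
        Finset.sum_le_sum fun ω _ => hpointwise ω
    _ = klDiv Q p - 1 + expect p (fun ω => exp (f ω)) := by
        rw [Finset.sum_add_distrib, Finset.sum_sub_distrib, hQ1]
        rfl

lemma exp_le_one_add_add_sq_div {x b : ℝ} (hxb : |x| ≤ b) (hb : b < 1) :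
    exp x ≤ 1 + x + x ^ 2 / (2 * (1 - b)) := by
  have hb0 : 0 ≤ b := (abs_nonneg x).trans hxb
  have htaylor : exp x ≤ 1 + x + x ^ 2 / 2 + |x| ^ 3 * (2 / 9) := by
    have h := abs_sub_le_iff.1 (exp_bound (hxb.trans hb.le) (n := 3) (by norm_num))
    norm_num [Finset.sum_range_succ, Nat.factorial] at h
    linarith [h.1]
  have hcube : |x| ^ 3 ≤ b * x ^ 2 := by
    rw [pow_succ', ← sq_abs x]
    exact mul_le_mul_of_nonneg_right hxb (sq_nonneg _)
  have hcoeff : (2 : ℝ) / 9 ≤ 1 / (2 * (1 - b)) := by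
    rw [div_le_div_iff₀ (by norm_num) (by linarith)]
    linarith
  have hsplit : x ^ 2 / (2 * (1 - b)) = x ^ 2 / 2 + b * x ^ 2 * (1 / (2 * (1 - b))) := by
    field_simp [(by linarith : (1 - b) ≠ 0)]
    ring
  rw [hsplit]
  linarith [mul_le_mul hcube hcoeff (by norm_num) (mul_nonneg hb0 (sq_nonneg x))]

section Bernstein

variable {Ω : Type*} [Fintype Ω] {p W : Ω → ℝ} {M : ℝ}

/-- Bernstein's bound on the exponential moment of a centred bounded variable. -/
lemma expect_exp_mul_le (hp : ∀ ω, 0 ≤ p ω) (hp1 : ∑ ω, p ω = 1) (hE : expect p W = 0)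
    (hWb : ∀ ω, |W ω| ≤ M) {t : ℝ} (ht : |t| * M < 1) :
    expect p (fun ω => exp (t * W ω)) ≤
      1 + t ^ 2 * expect p (fun ω => W ω ^ 2) / (2 * (1 - |t| * M)) := by
  set c := t ^ 2 / (2 * (1 - |t| * M))
  have hpointwise : ∀ ω, exp (t * W ω) ≤ 1 + t * W ω + c * W ω ^ 2 := by
    intro ω
    have hbound : |t * W ω| ≤ |t| * M := by
      rw [abs_mul]
      exact mul_le_mul_of_nonneg_left (hWb ω) (abs_nonneg t)
    calc exp (t * W ω) ≤ 1 + t * W ω + (t * W ω) ^ 2 / (2 * (1 - |t| * M)) :=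
          exp_le_one_add_add_sq_div hbound ht
      _ = 1 + t * W ω + c * W ω ^ 2 := by ring
  calc expect p (fun ω => exp (t * W ω))
      ≤ ∑ ω, (p ω + t * (p ω * W ω) + c * (p ω * W ω ^ 2)) :=
        Finset.sum_le_sum fun ω _ => by linarith [mul_le_mul_of_nonneg_left (hpointwise ω) (hp ω)]
    _ = 1 + t * expect p W + c * expect p (fun ω => W ω ^ 2) := by
        simp only [Finset.sum_add_distrib, ← Finset.mul_sum, hp1, expect]
    _ = 1 + t ^ 2 * expect p (fun ω => W ω ^ 2) / (2 * (1 - |t| * M)) := by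
        rw [hE]
        ring

variable {Q : Ω → ℝ}

lemma mul_expect_neg_le (hp : ∀ ω, 0 ≤ p ω) (hp1 : ∑ ω, p ω = 1) (hE : expect p W = 0)
    (hWb : ∀ ω, |W ω| ≤ M) (hQ : ∀ ω, 0 ≤ Q ω) (hQ1 : ∑ ω, Q ω = 1)
    (hac : ∀ ω, p ω = 0 → Q ω = 0) {l : ℝ} (hl : 0 ≤ l) (hlM : l * M < 1) :
    l * expect Q (fun ω => -W ω) ≤
      klDiv Q p + l ^ 2 * expect p (fun ω => W ω ^ 2) / (2 * (1 - l * M)) := by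
  have hlin : l * expect Q (fun ω => -W ω) = expect Q (fun ω => -l * W ω) := by
    simp only [expect, Finset.mul_sum]
    exact Finset.sum_congr rfl fun ω _ => by ring
  have hmgf := expect_exp_mul_le hp hp1 hE hWb (t := -l) (by rwa [abs_neg, abs_of_nonneg hl])
  rw [abs_neg, abs_of_nonneg hl, neg_sq] at hmgf
  linarith [expect_le_klDiv_sub_one_add_expect_exp hp hQ hQ1 hac (fun ω => -l * W ω)]

lemma expect_neg_le_sqrt_mul_add_mul (hp : ∀ ω, 0 ≤ p ω) (hp1 : ∑ ω, p ω = 1)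
    (hE : expect p W = 0) (hWb : ∀ ω, |W ω| ≤ M) (hM : 0 ≤ M) (hQ : ∀ ω, 0 ≤ Q ω)
    (hQ1 : ∑ ω, Q ω = 1) (hac : ∀ ω, p ω = 0 → Q ω = 0) {δ τ : ℝ} (hδ : 0 < δ) (hτ : 0 < τ)
    (hW2 : expect p (fun ω => W ω ^ 2) ≤ τ ^ 2) (hKL : klDiv Q p ≤ δ) :
    expect Q (fun ω => -W ω) ≤ sqrt (2 * δ) * τ + δ * M := by
  set s := sqrt (2 * δ)
  have hs : 0 < s := sqrt_pos.2 (by positivity)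
  have hs2 : s ^ 2 = 2 * δ := sq_sqrt (by positivity)
  have hden : 0 < τ + M * s := by positivity
  set l := s / (τ + M * s) with hl_def
  have hl : 0 < l := by positivity
  have hgap : 1 - l * M = τ / (τ + M * s) := by
    rw [hl_def]
    field_simp
    ring
  have hlM : l * M < 1 := by
    have : 0 < τ / (τ + M * s) := by positivity
    linarith
  have hbound := mul_expect_neg_le hp hp1 hE hWb hQ hQ1 hac hl.le hlM
  have hrhs : δ + l ^ 2 * τ ^ 2 / (2 * (1 - l * M)) = l * (s * τ + δ * M) := by
    rw [hgap, hl_def]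
    field_simp
    linear_combination -τ * hs2
  have hmono : l ^ 2 * expect p (fun ω => W ω ^ 2) / (2 * (1 - l * M)) ≤
      l ^ 2 * τ ^ 2 / (2 * (1 - l * M)) := by
    gcongr
  refine le_of_mul_le_mul_left ?_ hl
  calc l * expect Q (fun ω => -W ω)
      ≤ klDiv Q p + l ^ 2 * expect p (fun ω => W ω ^ 2) / (2 * (1 - l * M)) := hbound
    _ ≤ δ + l ^ 2 * τ ^ 2 / (2 * (1 - l * M)) := add_le_add hKL hmono
    _ = l * (s * τ + δ * M) := hrhs

end Bernstein

theorem stmt10 {Ω : Type*} [Fintype Ω] (p : Ω → ℝ)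
    (hp : ∀ ω, 0 ≤ p ω) (hp1 : ∑ ω, p ω = 1)
    (W : Ω → ℝ) (M σ δ : ℝ) (hWb : ∀ ω, |W ω| ≤ M)
    (hE : expect p W = 0) (hσ : 0 ≤ σ) (hVar : variance p W = σ ^ 2) (hδ : 0 < δ)
    (Q : Ω → ℝ) (hQ : ∀ ω, 0 ≤ Q ω) (hQ1 : ∑ ω, Q ω = 1)
    (hac : ∀ ω, p ω = 0 → Q ω = 0) (hKL : klDiv Q p ≤ δ) :
    expect Q (fun ω => -W ω) ≤ Real.sqrt (2 * δ) * σ + δ * M := by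
  obtain ⟨ω₀⟩ : Nonempty Ω := by
    by_contra h
    simp [not_nonempty_iff.1 h] at hp1
  have hM : 0 ≤ M := (abs_nonneg _).trans (hWb ω₀)
  have hW2 : expect p (fun ω => W ω ^ 2) = σ ^ 2 := by
    simpa [variance, hE] using hVar
  have hs : 0 < sqrt (2 * δ) := sqrt_pos.2 (by positivity)
  refine le_of_forall_pos_le_add fun ε hε => ?_
  have hτ : 0 < σ + ε / sqrt (2 * δ) := by positivity
  have hW2τ : expect p (fun ω => W ω ^ 2) ≤ (σ + ε / sqrt (2 * δ)) ^ 2 := by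
    rw [hW2]
    gcongr
    linarith [div_pos hε hs]
  calc expect Q (fun ω => -W ω)
      ≤ sqrt (2 * δ) * (σ + ε / sqrt (2 * δ)) + δ * M :=
        expect_neg_le_sqrt_mul_add_mul hp hp1 hE hWb hM hQ hQ1 hac hδ hτ hW2τ hKL
    _ = sqrt (2 * δ) * σ + δ * M + ε := by
        rw [mul_add, mul_div_cancel₀ _ hs.ne']
        ring
end

section
/- Let {V_n} be a nonnegative sequence of random variables adapted to a filtration {F_n}, and let {a_n}, {b_n} be nonnegative deterministic sequences with a_n ∈ [0,1], Σ a_n = ∞, and Σ b_n < ∞. If E[V_{n+1} | F_n] ≤ (1 − a_n)V_n + b_n almost surely for all n, then V_n → 0 almost surely. -/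
open MeasureTheory Filter Topology

/-! Adding the tail sums `∑_{k ≥ n} b k` to `V n` gives a nonnegative supermartingale, which
converges almost surely; since the tails tend to `0`, so does `V n ω`, to some limit. Taking
expectations, `e n = 𝔼[V n]` satisfies `e (n+1) ≤ (1 - a n) e n + b n`, which telescopes to
`∑ a n * e n < ∞`; as `∑ a n = ∞`, this forces `liminf e n = 0`, and Fatou's lemma turns it into
`liminf V n = 0` almost surely, so the limit is `0`. -/

theorem summable_mul_of_le_one_sub_mul_add {a b e : ℕ → ℝ} (ha : ∀ n, 0 ≤ a n)
    (he : ∀ n, 0 ≤ e n) (hb : ∀ n, 0 ≤ b n) (hbsum : Summable b)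
    (hrec : ∀ n, e (n + 1) ≤ (1 - a n) * e n + b n) : Summable fun n => a n * e n := by
  have htelescope : ∀ N, ∑ n ∈ Finset.range N, a n * e n + e N ≤
      e 0 + ∑ n ∈ Finset.range N, b n := by
    intro N
    induction N with
    | zero => simp
    | succ N ih =>
      rw [Finset.sum_range_succ, Finset.sum_range_succ]
      linarith [hrec N]
  refine summable_of_sum_range_le (c := e 0 + ∑' n, b n) (fun n => mul_nonneg (ha n) (he n))
    fun N => ?_
  linarith [htelescope N, he N, hbsum.sum_le_tsum (Finset.range N) fun i _ => hb i]

theorem frequently_lt_of_summable_mul {a e : ℕ → ℝ} (ha : ∀ n, 0 ≤ a n) (hasum : ¬ Summable a)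
    (hae : Summable fun n => a n * e n) {ε : ℝ} (hε : 0 < ε) : ∃ᶠ n in atTop, e n < ε := by
  by_contra h
  obtain ⟨N, hN⟩ := eventually_atTop.1 (not_frequently.1 h)
  refine hasum ((summable_nat_add_iff N).1 ((summable_mul_right_iff hε.ne').1 ?_))
  exact ((summable_nat_add_iff N).2 hae).of_nonneg_of_le (fun k => mul_nonneg (ha _) hε.le)
    fun k => mul_le_mul_of_nonneg_left (not_lt.1 (hN _ (Nat.le_add_left N k))) (ha _)

theorem liminf_ofReal_eq_zero_of_frequently_lt {e : ℕ → ℝ}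
    (he : ∀ ε > 0, ∃ᶠ n in atTop, e n < ε) :
    liminf (fun n => ENNReal.ofReal (e n)) atTop = 0 := by
  refine le_antisymm (ENNReal.le_of_forall_pos_le_add fun ε hε _ => ?_) zero_le
  rw [zero_add]
  refine liminf_le_of_frequently_le' ((he ε hε).mono fun n hn => ?_)
  simpa using ENNReal.ofReal_le_ofReal hn.le

theorem tendsto_zero_of_liminf_ofReal_eq_zero {u : ℕ → ℝ} {c : ℝ}
    (hu : Tendsto u atTop (𝓝 c)) (hnn : ∀ n, 0 ≤ u n)
    (hliminf : liminf (fun n => ENNReal.ofReal (u n)) atTop = 0) :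
    Tendsto u atTop (𝓝 0) := by
  have hc : ENNReal.ofReal c = 0 :=
    (((ENNReal.continuous_ofReal.tendsto c).comp hu).liminf_eq).symm.trans hliminf
  have : c = 0 := le_antisymm (ENNReal.ofReal_eq_zero.1 hc) (ge_of_tendsto' hu hnn)
  rwa [this] at hu

theorem tsum_nat_add_eq_add_tsum_nat_add_succ {b : ℕ → ℝ} (hb : Summable b) (n : ℕ) :
    ∑' k, b (k + n) = b n + ∑' k, b (k + (n + 1)) := by
  rw [((summable_nat_add_iff n).2 hb).tsum_eq_zero_add]
  simp only [zero_add, add_right_comm _ 1 n, add_assoc]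

section

variable {Ω : Type*} {m0 : MeasurableSpace Ω} {μ : Measure Ω}

theorem ae_liminf_eq_zero_of_liminf_lintegral_eq_zero {f : ℕ → Ω → ENNReal}
    (hf : ∀ n, Measurable (f n)) (h : liminf (fun n => ∫⁻ ω, f n ω ∂μ) atTop = 0) :
    ∀ᵐ ω ∂μ, liminf (fun n => f n ω) atTop = 0 :=
  (lintegral_eq_zero_iff (Measurable.liminf hf)).1
    (le_antisymm ((lintegral_liminf_le hf).trans h.le) zero_le)

theorem MeasureTheory.Supermartingale.exists_ae_tendsto_of_nonneg [IsFiniteMeasure μ]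
    {ℱ : Filtration ℕ m0} {X : ℕ → Ω → ℝ} (hX : Supermartingale X ℱ μ) (hnn : ∀ n, 0 ≤ᵐ[μ] X n) :
    ∀ᵐ ω ∂μ, ∃ c, Tendsto (fun n => X n ω) atTop (𝓝 c) := by
  have hbdd : ∀ n, eLpNorm ((-X) n) 1 μ ≤ (ENNReal.ofReal (∫ ω, X 0 ω ∂μ)).toNNReal := by
    intro n
    rw [Pi.neg_apply, eLpNorm_neg, ENNReal.coe_toNNReal ENNReal.ofReal_ne_top,
      eLpNorm_one_eq_lintegral_enorm, ← ofReal_integral_norm_eq_lintegral_enorm (hX.integrable n)]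
    have hmean := hX.setIntegral_le (Nat.zero_le n) MeasurableSet.univ
    rw [setIntegral_univ, setIntegral_univ] at hmean
    refine ENNReal.ofReal_le_ofReal (le_of_eq_of_le ?_ hmean)
    exact integral_congr_ae ((hnn n).mono fun ω h => Real.norm_of_nonneg h)
  filter_upwards [hX.neg.exists_ae_tendsto_of_bdd hbdd] with ω ⟨c, hc⟩
  exact ⟨-c, by simpa using hc.neg⟩

theorem integral_le_of_condExp_le [IsProbabilityMeasure μ] {m : MeasurableSpace Ω} (hm : m ≤ m0)
    {f g : Ω → ℝ} {c d : ℝ} (hf : Integrable f μ) (h : μ[g|m] ≤ᵐ[μ] fun ω => c * f ω + d) :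
    ∫ ω, g ω ∂μ ≤ c * ∫ ω, f ω ∂μ + d := by
  have hmono := integral_mono_ae integrable_condExp ((hf.const_mul c).add (integrable_const d)) h
  rw [integral_condExp hm] at hmono
  change _ ≤ ∫ ω, c * f ω + d ∂μ at hmono
  rwa [integral_add (hf.const_mul c) (integrable_const d), integral_const_mul, integral_const,
    probReal_univ, one_smul] at hmono

variable [IsFiniteMeasure μ] {ℱ : Filtration ℕ m0} {V : ℕ → Ω → ℝ} {b : ℕ → ℝ}

theorem supermartingale_add_tsum_nat_add (hadapt : Adapted ℱ V) (hint : ∀ n, Integrable (V n) μ)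
    (hbsum : Summable b) (hrec : ∀ n, μ[V (n + 1)|ℱ n] ≤ᵐ[μ] fun ω => V n ω + b n) :
    Supermartingale (fun n ω => V n ω + ∑' k, b (k + n)) ℱ μ := by
  refine supermartingale_nat (fun n => ((hadapt n).add measurable_const).stronglyMeasurable)
    (fun n => (hint n).add (integrable_const _)) fun n => ?_
  have hcondExp := condExp_add (m := ℱ n) (μ := μ) (hint (n + 1))
    (integrable_const (∑' k, b (k + (n + 1))))
  rw [condExp_const (ℱ.le n)] at hcondExp
  filter_upwards [hcondExp, hrec n] with ω hω hrecω
  simp only [Pi.add_apply] at hω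
  refine hω.le.trans ?_
  rw [tsum_nat_add_eq_add_tsum_nat_add_succ hbsum n]
  linarith

theorem ae_exists_tendsto_of_condExp_le_add (hadapt : Adapted ℱ V)
    (hint : ∀ n, Integrable (V n) μ) (hVnn : ∀ n, 0 ≤ᵐ[μ] V n) (hb : ∀ n, 0 ≤ b n)
    (hbsum : Summable b) (hrec : ∀ n, μ[V (n + 1)|ℱ n] ≤ᵐ[μ] fun ω => V n ω + b n) :
    ∀ᵐ ω ∂μ, ∃ c, Tendsto (fun n => V n ω) atTop (𝓝 c) := by
  have hXnn : ∀ n, 0 ≤ᵐ[μ] fun ω => V n ω + ∑' k, b (k + n) :=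
    fun n => (hVnn n).mono fun ω h => add_nonneg h (tsum_nonneg fun k => hb _)
  have hX := supermartingale_add_tsum_nat_add hadapt hint hbsum hrec
  filter_upwards [hX.exists_ae_tendsto_of_nonneg hXnn] with ω ⟨c, hc⟩
  exact ⟨c, by simpa using hc.sub (tendsto_sum_nat_add b)⟩

end

theorem stmt15 {Ω : Type*} [m0 : MeasurableSpace Ω] (μ : Measure Ω) [IsProbabilityMeasure μ]
    (ℱ : Filtration ℕ m0) (V : ℕ → Ω → ℝ) (a b : ℕ → ℝ)
    (hadapt : Adapted ℱ V) (hint : ∀ n, Integrable (V n) μ)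
    (hVnn : ∀ n, 0 ≤ᵐ[μ] V n)
    (ha : ∀ n, a n ∈ Set.Icc (0 : ℝ) 1) (hb : ∀ n, 0 ≤ b n)
    (hasum : ¬ Summable a) (hbsum : Summable b)
    (hrec : ∀ n, μ[V (n + 1) | ℱ n] ≤ᵐ[μ] fun ω => (1 - a n) * V n ω + b n) :
    ∀ᵐ ω ∂μ, Tendsto (fun n => V n ω) atTop (nhds 0) := by
  have ha0 : ∀ n, 0 ≤ a n := fun n => (ha n).1
  have hconv : ∀ᵐ ω ∂μ, ∃ c, Tendsto (fun n => V n ω) atTop (𝓝 c) :=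
    ae_exists_tendsto_of_condExp_le_add hadapt hint hVnn hb hbsum fun n =>
      (hrec n).trans <| (hVnn n).mono fun ω hω => by
        nlinarith [mul_nonneg (ha0 n) (show 0 ≤ V n ω from hω)]
  have hmean : Summable fun n => a n * ∫ ω, V n ω ∂μ :=
    summable_mul_of_le_one_sub_mul_add ha0 (fun n => integral_nonneg_of_ae (hVnn n)) hb hbsum
      fun n => integral_le_of_condExp_le (ℱ.le n) (hint n) (hrec n)
  have hlintegral : ∀ n, ∫⁻ ω, ENNReal.ofReal (V n ω) ∂μ = ENNReal.ofReal (∫ ω, V n ω ∂μ) :=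
    fun n => (ofReal_integral_eq_lintegral_ofReal (hint n) (hVnn n)).symm
  have hliminf : liminf (fun n => ∫⁻ ω, ENNReal.ofReal (V n ω) ∂μ) atTop = 0 := by
    simp_rw [hlintegral]
    exact liminf_ofReal_eq_zero_of_frequently_lt fun ε hε =>
      frequently_lt_of_summable_mul ha0 hasum hmean hε
  have hmeas : ∀ n, Measurable fun ω => ENNReal.ofReal (V n ω) :=
    fun n => ENNReal.measurable_ofReal.comp ((hadapt n).mono (ℱ.le n) le_rfl)
  filter_upwards [hconv, ae_liminf_eq_zero_of_liminf_lintegral_eq_zero hmeas hliminf,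
    ae_all_iff.2 hVnn] with ω ⟨c, hc⟩ hω hnn
  exact tendsto_zero_of_liminf_ofReal_eq_zero hc hnn hω
end
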